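/- The hypergraph baseline is strictly decreasing in group size when at least two classes are nonempty: if m ≥ 2 and n_c ≥ 1 for at least two classes, then for all g ≥ 1 with b_h^{g+1} > 0 one has b_h^{g+1} < b_h^g. -/
import Mathlib

lemma aux_le (n k g : ℕ) (hk : k ≤ n) :
    k.choose (g+1) * n.choose g ≤ k.choose g * n.choose (g+1) := by
  have h1 : k.choose (g+1) * (g+1) = k.choose g * (k - g) := Nat.choose_succ_right_eq k g
  have h2 : n.choose (g+1) * (g+1) = n.choose g * (n - g) := Nat.choose_succ_right_eq n g
  have hab : k - g ≤ n - g := Nat.sub_le_sub_right hk g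
  have : k.choose (g+1) * n.choose g * (g+1) ≤ k.choose g * n.choose (g+1) * (g+1) := by
    calc k.choose (g+1) * n.choose g * (g+1)
        = k.choose (g+1) * (g+1) * n.choose g := by ring
      _ = k.choose g * (k-g) * n.choose g := by rw [h1]
      _ ≤ k.choose g * (n-g) * n.choose g :=
          Nat.mul_le_mul_right _ (Nat.mul_le_mul_left _ hab)
      _ = k.choose g * (n.choose g * (n-g)) := by ring
      _ = k.choose g * (n.choose (g+1) * (g+1)) := by rw [h2]
      _ = k.choose g * n.choose (g+1) * (g+1) := by ring
  exact Nat.le_of_mul_le_mul_right this (Nat.succ_pos g)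

lemma aux_lt (n k g : ℕ) (hk1 : g + 1 ≤ k) (hkn : k < n) :
    k.choose (g+1) * n.choose g < k.choose g * n.choose (g+1) := by
  have h1 : k.choose (g+1) * (g+1) = k.choose g * (k - g) := Nat.choose_succ_right_eq k g
  have h2 : n.choose (g+1) * (g+1) = n.choose g * (n - g) := Nat.choose_succ_right_eq n g
  have hKg : 0 < k.choose g := Nat.choose_pos (by omega)
  have hNg : 0 < n.choose g := Nat.choose_pos (by omega)
  have hab : k - g < n - g := by omega
  have : k.choose (g+1) * n.choose g * (g+1) < k.choose g * n.choose (g+1) * (g+1) := by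
    calc k.choose (g+1) * n.choose g * (g+1)
        = k.choose (g+1) * (g+1) * n.choose g := by ring
      _ = k.choose g * (k-g) * n.choose g := by rw [h1]
      _ < k.choose g * (n-g) * n.choose g := by
          apply Nat.mul_lt_mul_of_lt_of_le (Nat.mul_lt_mul_of_le_of_lt (le_refl _) hab hKg)
            (le_refl _) hNg
      _ = k.choose g * (n.choose g * (n-g)) := by ring
      _ = k.choose g * (n.choose (g+1) * (g+1)) := by rw [h2]
      _ = k.choose g * n.choose (g+1) * (g+1) := by ring
  exact Nat.lt_of_mul_lt_mul_right this

/-- The hypergraph baseline `b_h^g = (∑ c C(n_c,g)) / C(n,g)` is strictly decreasing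
in group size when at least two classes are nonempty: for `g ≥ 1`, if `b_h^{g+1} > 0`
then `b_h^{g+1} < b_h^g`. -/
theorem stmt9 {m : ℕ} (nc : Fin m → ℕ) (g : ℕ) (hg : 1 ≤ g)
    (htwo : ∃ c d : Fin m, c ≠ d ∧ 1 ≤ nc c ∧ 1 ≤ nc d)
    (hpos : (0 : ℚ) < (∑ c, ((nc c).choose (g + 1) : ℚ))
        / (((∑ c, nc c).choose (g + 1) : ℕ) : ℚ)) :
    (∑ c, ((nc c).choose (g + 1) : ℚ)) / (((∑ c, nc c).choose (g + 1) : ℕ) : ℚ)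
      < (∑ c, ((nc c).choose g : ℚ)) / (((∑ c, nc c).choose g : ℕ) : ℚ) := by
  set n := ∑ c, nc c with hn
  -- denominator at g+1 is positive
  have hD' : 0 < ((n.choose (g+1) : ℕ) : ℚ) := by
    rcases (Nat.cast_nonneg (n.choose (g+1)) : (0:ℚ) ≤ _).lt_or_eq with h | h
    · exact h
    · rw [← h, div_zero] at hpos; exact absurd hpos (lt_irrefl 0)
  have hDn' : 0 < n.choose (g+1) := by exact_mod_cast hD'
  have hgn : g + 1 ≤ n := by
    by_contra h
    rw [Nat.choose_eq_zero_of_lt (lt_of_not_ge h)] at hDn'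
    exact lt_irrefl 0 hDn'
  have hDn : 0 < n.choose g := Nat.choose_pos (by omega)
  have hD : 0 < ((n.choose g : ℕ) : ℚ) := by exact_mod_cast hDn
  -- numerator positive, get a class with nc c0 ≥ g+1
  have hA' : 0 < ∑ c, ((nc c).choose (g+1) : ℚ) := by
    by_contra h
    push_neg at h
    exact absurd hpos (not_lt.mpr (div_nonpos_of_nonpos_of_nonneg h hD'.le))
  have hA'n : 0 < ∑ c, (nc c).choose (g+1) := by
    have : (0:ℚ) < ((∑ c, (nc c).choose (g+1) : ℕ) : ℚ) := by push_cast; exact hA'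
    exact_mod_cast this
  obtain ⟨c0, -, hc0⟩ := Finset.exists_ne_zero_of_sum_ne_zero (Nat.pos_iff_ne_zero.mp hA'n)
  have hc0pos : 0 < (nc c0).choose (g+1) := Nat.pos_of_ne_zero hc0
  have hc0g : g + 1 ≤ nc c0 := by
    by_contra h
    rw [Nat.choose_eq_zero_of_lt (lt_of_not_ge h)] at hc0pos
    exact lt_irrefl 0 hc0pos
  -- every class size is ≤ n, and nc c0 < n
  have hle : ∀ c : Fin m, nc c ≤ n :=
    fun c => Finset.single_le_sum (fun i _ => Nat.zero_le _) (Finset.mem_univ c)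
  obtain ⟨c, d, hcd, hc, hd⟩ := htwo
  have hc0lt : nc c0 < n := by
    rcases eq_or_ne c c0 with h | hne
    · rw [← h]
      have hpair : nc c + nc d ≤ n := by
        rw [hn]
        have := Finset.sum_le_sum_of_subset (f := nc) (Finset.subset_univ ({c, d} : Finset (Fin m)))
        rwa [Finset.sum_pair hcd] at this
      omega
    · have hpair : nc c + nc c0 ≤ n := by
        rw [hn]
        have := Finset.sum_le_sum_of_subset (f := nc) (Finset.subset_univ ({c, c0} : Finset (Fin m)))
        rwa [Finset.sum_pair hne] at this
      omega
  -- key natural-number inequality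
  have hsum : (∑ c, (nc c).choose (g+1) * n.choose g)
      < ∑ c, (nc c).choose g * n.choose (g+1) := by
    apply Finset.sum_lt_sum (fun c _ => aux_le n (nc c) g (hle c))
    exact ⟨c0, Finset.mem_univ c0, aux_lt n (nc c0) g hc0g hc0lt⟩
  rw [div_lt_div_iff₀ hD' hD]
  have hcast : ((∑ c, (nc c).choose (g+1) * n.choose g : ℕ) : ℚ)
      < ((∑ c, (nc c).choose g * n.choose (g+1) : ℕ) : ℚ) := by exact_mod_cast hsum
  push_cast at hcast
  rw [← Finset.sum_mul, ← Finset.sum_mul] at hcast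
  exact hcast
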